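/- Fix vectors p₁,…,p₅, u₁,…,u₅ ∈ ℝ³. If (w, λ₁, λ₂, ρ₁,…,ρ₅, a, b, c, d, e) is a solution of the IOD system for the data (pᵢ, uᵢ), then so is (−w, λ₁, λ₂, ρ₁,…,ρ₅, a, b, −c, d, −e). -/

import Mathlib

/-- The cross product on `EuclideanSpace ℝ (Fin 3)`. -/
noncomputable def cross3 (x y : EuclideanSpace ℝ (Fin 3)) : EuclideanSpace ℝ (Fin 3) :=
  (EuclideanSpace.equiv (Fin 3) ℝ).symm
    ![x 1 * y 2 - x 2 * y 1, x 2 * y 0 - x 0 * y 2, x 0 * y 1 - x 1 * y 0]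

/-- The 15-equation polynomial system for angles-only initial orbit determination:
with `v₂ = λ₂ (w × u₁)`, `v₁ = λ₁ (v₂ × w)`, `rᵢ = pᵢ + ρᵢ uᵢ`, `xᵢ = ⟨rᵢ, v₁⟩`,
`yᵢ = ⟨rᵢ, v₂⟩`, the constraints are: `w`, `v₁`, `v₂` are unit vectors, each `rᵢ`
lies in the orbital plane, the five planar points lie on the normalized conic with
coefficients `(a,b,c,d,e)`, and the two focal polynomials vanish. -/
noncomputable def IsIODSolution (p u : Fin 5 → EuclideanSpace ℝ (Fin 3))
    (w : EuclideanSpace ℝ (Fin 3)) (l₁ l₂ : ℝ) (ρ : Fin 5 → ℝ)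
    (a b c d e : ℝ) : Prop :=
  let v₂ : EuclideanSpace ℝ (Fin 3) := l₂ • cross3 w (u 0)
  let v₁ : EuclideanSpace ℝ (Fin 3) := l₁ • cross3 v₂ w
  let r : Fin 5 → EuclideanSpace ℝ (Fin 3) := fun i => p i + ρ i • u i
  let x : Fin 5 → ℝ := fun i => (inner ℝ (r i) v₁ : ℝ)
  let y : Fin 5 → ℝ := fun i => (inner ℝ (r i) v₂ : ℝ)
  (inner ℝ w w : ℝ) = 1 ∧ (inner ℝ v₁ v₁ : ℝ) = 1 ∧ (inner ℝ v₂ v₂ : ℝ) = 1 ∧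
  (∀ i, (inner ℝ (r i) w : ℝ) = 0) ∧
  (∀ i, a * x i ^ 2 + b * y i ^ 2 + c * x i * y i + d * x i + e * y i + 1 = 0) ∧
  e ^ 2 - 4 * b - d ^ 2 + 4 * a = 0 ∧
  d * e - 2 * c = 0

lemma cross3_neg_left (x y : EuclideanSpace ℝ (Fin 3)) : cross3 (-x) y = -cross3 x y := by
  ext i
  fin_cases i <;>
    simp only [cross3, PiLp.neg_apply, PiLp.continuousLinearEquiv_symm_apply, Fin.zero_eta,
      Fin.mk_one, Fin.reduceFinMk, Matrix.cons_val] <;>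
    ring

lemma cross3_neg_right (x y : EuclideanSpace ℝ (Fin 3)) : cross3 x (-y) = -cross3 x y := by
  ext i
  fin_cases i <;>
    simp only [cross3, PiLp.neg_apply, PiLp.continuousLinearEquiv_symm_apply, Fin.zero_eta,
      Fin.mk_one, Fin.reduceFinMk, Matrix.cons_val] <;>
    ring

theorem iod_symmetry_w (p u : Fin 5 → EuclideanSpace ℝ (Fin 3))
    (w : EuclideanSpace ℝ (Fin 3)) (l₁ l₂ : ℝ) (ρ : Fin 5 → ℝ) (a b c d e : ℝ)
    (h : IsIODSolution p u w l₁ l₂ ρ a b c d e) :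
    IsIODSolution p u (-w) l₁ l₂ ρ a b (-c) d (-e) := by
  have hv₂ : l₂ • cross3 (-w) (u 0) = -(l₂ • cross3 w (u 0)) := by
    rw [cross3_neg_left, smul_neg]
  have hv₁ : l₁ • cross3 (-(l₂ • cross3 w (u 0))) (-w) = l₁ • cross3 (l₂ • cross3 w (u 0)) w := by
    rw [cross3_neg_left, cross3_neg_right, neg_neg]
  dsimp only [IsIODSolution] at h ⊢
  rw [hv₂, hv₁]
  simp only [inner_neg_left, inner_neg_right, neg_neg]
  obtain ⟨hw, hv₁_unit, hv₂_unit, hplane, hconic, hfocal₁, hfocal₂⟩ := h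
  refine ⟨hw, hv₁_unit, hv₂_unit, fun i => by rw [hplane i, neg_zero], fun i => ?_, ?_, ?_⟩
  · linear_combination hconic i
  · linear_combination hfocal₁
  · linear_combination -hfocal₂
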